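/- Let (V_j)_{j∈ℕ} be a sequence of nonnegative reals, ρ : ℝ≥0 → ℝ≥0 positive definite and continuous, γ : ℕ → ℝ≥0 with ∑_{j=0}^∞ γ(j) < ∞ and γ(j) → 0. Suppose V_{j+1} ≤ V_j - ρ(V_j) + γ(j) for all j. Then V_j → 0 as j → ∞. -/
import Mathlib


/-- Perturbed discrete Lyapunov inequality with summable vanishing perturbation:
`V (j+1) ≤ V j - ρ (V j) + γ j` with `ρ` continuous positive definite forces `V j → 0`. -/
theorem stmt_1 (V : ℕ → ℝ) (ρ : ℝ → ℝ) (γ : ℕ → ℝ)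
    (hV_nonneg : ∀ j : ℕ, 0 ≤ V j)
    (hρ_cont : Continuous ρ)
    (hρ0 : ρ 0 = 0) (hρ_pos : ∀ s : ℝ, 0 < s → 0 < ρ s)
    (hγ_nonneg : ∀ j : ℕ, 0 ≤ γ j)
    (hγ_sum : Summable γ)
    (hγ_tendsto : Filter.Tendsto γ Filter.atTop (nhds 0))
    (hdec : ∀ j : ℕ, V (j + 1) ≤ V j - ρ (V j) + γ j) :
    Filter.Tendsto V Filter.atTop (nhds 0) := by
  have hρV_nonneg : ∀ j, 0 ≤ ρ (V j) := by
    intro j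
    rcases eq_or_lt_of_le (hV_nonneg j) with h | h
    · rw [← h, hρ0]
    · exact (hρ_pos _ h).le
  have key : ∀ n, (∑ j ∈ Finset.range n, ρ (V j)) + V n
      ≤ V 0 + ∑ j ∈ Finset.range n, γ j := by
    intro n
    induction n with
    | zero => simp
    | succ n ih =>
      rw [Finset.sum_range_succ, Finset.sum_range_succ]
      have := hdec n
      linarith
  set M := V 0 + ∑' j, γ j with hM
  have hsum_le : ∀ n, ∑ j ∈ Finset.range n, γ j ≤ ∑' j, γ j :=
    fun n => Summable.sum_le_tsum (Finset.range n) (fun i _ => hγ_nonneg i) hγ_sum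
  have hVle : ∀ n, V n ≤ M := by
    intro n
    have h1 := key n
    have h2 : 0 ≤ ∑ j ∈ Finset.range n, ρ (V j) :=
      Finset.sum_nonneg fun i _ => hρV_nonneg i
    have h3 := hsum_le n
    simp only [hM]
    linarith
  have hρsummable : Summable (fun j => ρ (V j)) := by
    apply summable_of_sum_range_le (c := M) hρV_nonneg
    intro n
    have h1 := key n
    have h3 := hsum_le n
    have h4 := hV_nonneg n
    simp only [hM]
    linarith
  have hρtend : Filter.Tendsto (fun j => ρ (V j)) Filter.atTop (nhds 0) :=
    hρsummable.tendsto_atTop_zero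
  rw [Metric.tendsto_atTop]
  intro ε hε
  by_cases hc : M < ε
  · exact ⟨0, fun n _ => by
      rw [Real.dist_eq, sub_zero, abs_of_nonneg (hV_nonneg n)]
      exact lt_of_le_of_lt (hVle n) hc⟩
  · push_neg at hc
    have hne : (Set.Icc ε M).Nonempty := ⟨ε, le_refl _, hc⟩
    obtain ⟨x, hx, hmin⟩ := (isCompact_Icc).exists_isMinOn hne hρ_cont.continuousOn
    have hm : 0 < ρ x := hρ_pos _ (lt_of_lt_of_le hε hx.1)
    rw [Metric.tendsto_atTop] at hρtend
    obtain ⟨N, hN⟩ := hρtend (ρ x) hm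
    refine ⟨N, fun n hn => ?_⟩
    rw [Real.dist_eq, sub_zero, abs_of_nonneg (hV_nonneg n)]
    by_contra hcon
    push_neg at hcon
    have hVn : V n ∈ Set.Icc ε M := ⟨hcon, hVle n⟩
    have : ρ x ≤ ρ (V n) := hmin hVn
    have h2 := hN n hn
    rw [Real.dist_eq, sub_zero, abs_of_nonneg (hρV_nonneg n)] at h2
    linarith
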